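/- Fix a weighted subclass collection T = [G, w] and a point (x,y) ∈ X × [0,1]. If (x,y) ∈ Highvote(T, α) for some α ≥ 0, then for every λ ∈ [Λ]: (Σ_{v_λ} w_λ^{v_λ}·1[|SOA_{α_λ}(G_λ^{v_λ})(x) − y| > 5α_λ]) / (Σ_{u_λ} w_λ^{u_λ}) ≤ α/α_λ. -/

import Mathlib

/-- The node of a binary tree at depth `t` along the sign path `ε` is indexed by the
prefix `(ε 0, …, ε (t-1))`. -/
def pathPrefix (ε : ℕ → Bool) (t : ℕ) : List Bool := List.ofFn (fun i : Fin t => ε i)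

/-- The pair of trees `(x, s)` of depth `d` is `α`-shattered by `F`: for every sign
pattern `ε` there is `f ∈ F` achieving margin `α/2` with the prescribed sign at every
node along the path `ε`. -/
def Shatters {Z : Type*} (F : Set (Z → ℝ)) (α : ℝ) (d : ℕ)
    (x : List Bool → Z) (s : List Bool → ℝ) : Prop :=
  ∀ ε : ℕ → Bool, ∃ f ∈ F, ∀ t < d,
    (if ε t then f (x (pathPrefix ε t)) - s (pathPrefix ε t)
      else s (pathPrefix ε t) - f (x (pathPrefix ε t))) ≥ α / 2

/-- `F` `α`-shatters some pair of trees of depth `d`. -/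
def IsShattered {Z : Type*} (F : Set (Z → ℝ)) (α : ℝ) (d : ℕ) : Prop :=
  ∃ x s, Shatters F α d x s

/-- The sequential fat-shattering dimension of `F` at scale `α`: the largest depth `d`
(possibly `⊤`) such that some pair of trees of depth `d` is `α`-shattered by `F`. -/
noncomputable def sfat {Z : Type*} (F : Set (Z → ℝ)) (α : ℝ) : ℕ∞ :=
  sSup {n : ℕ∞ | ∃ d : ℕ, n = (d : ℕ∞) ∧ IsShattered F α d}

/-- The `α`-restriction of `F` to `(x,y)`: those `f ∈ F` with `⌊y/α⌋ = ⌊f x/α⌋`. -/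
def restrictAt {X : Type*} (F : Set (X → ℝ)) (α : ℝ) (x : X) (y : ℝ) : Set (X → ℝ) :=
  {f ∈ F | ⌊y / α⌋ = ⌊f x / α⌋}

open Classical in
/-- The smallest bucket index `j* < ⌊1/α⌋+1` maximizing `sfat_α(F|^α_{(x, jα)})`. -/
noncomputable def soaIdx {X : Type*} (F : Set (X → ℝ)) (α : ℝ) (x : X) : ℕ :=
  if h : ∃ j, j < ⌊1/α⌋₊ + 1 ∧ ∀ j' < ⌊1/α⌋₊ + 1,
      sfat (restrictAt F α x ((j' : ℝ) * α)) α ≤ sfat (restrictAt F α x ((j : ℝ) * α)) α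
  then Nat.find h else 0

/-- The SOA hypothesis for `F` at scale `α`: `SOA_α(F)(x) := (j* + 1)·α`. -/
noncomputable def soa {X : Type*} (F : Set (X → ℝ)) (α : ℝ) (x : X) : ℝ :=
  ((soaIdx F α x : ℝ) + 1) * α

open Classical in
/-- The cutoff point of the hierarchical aggregation rule. -/
noncomputable def cutoff (Λ : ℕ) (g : ℕ → ℝ) : ℕ :=
  if h : ∃ l, (1 ≤ l ∧ l < Λ) ∧ 2 * ((2:ℝ) ^ l)⁻¹ < |g l - g (l + 1)| then Nat.find h else Λ

/-- The hierarchical aggregation `HAgg(g_1,…,g_Λ) = g_{λ̄}` at the cutoff point. -/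
noncomputable def hagg (Λ : ℕ) (g : ℕ → ℝ) : ℝ := g (cutoff Λ g)

/-- The sequence of per-scale SOA predictions at `x` along a path `v` through a
weighted subclass collection with subclasses `G l i` at level `l`. -/
noncomputable def gseq {X : Type*} (Λ : ℕ) (G : ℕ → ℕ → Set (X → ℝ)) (x : X)
    (v : Fin Λ → ℕ) : ℕ → ℝ :=
  fun t => if ht : 1 ≤ t ∧ t ≤ Λ then
    soa (G t (v ⟨t - 1, by omega⟩)) ((2:ℝ) ^ t)⁻¹ x else 0

/-- `SOA(G^v_{1:Λ})(x)`: hierarchical aggregation along the path `v`. -/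
noncomputable def soaPath {X : Type*} (Λ : ℕ) (G : ℕ → ℕ → Set (X → ℝ)) (x : X)
    (v : Fin Λ → ℕ) : ℝ := hagg Λ (gseq Λ G x v)

/-- The truncated error `Terr(G^v_{1:Λ}, x, y)`. -/
noncomputable def terrPath {X : Type*} (Λ : ℕ) (G : ℕ → ℕ → Set (X → ℝ)) (x : X)
    (v : Fin Λ → ℕ) (y : ℝ) : ℝ :=
  max |soaPath Λ G x v - y| ((2:ℝ) ^ cutoff Λ (gseq Λ G x v))⁻¹

/-- `N_Λ(T)`: the finite set of index paths `v` with `v l < n (l+1)` at each level. -/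
noncomputable def paths (Λ : ℕ) (n : ℕ → ℕ) : Finset (Fin Λ → ℕ) :=
  Fintype.piFinset (fun l : Fin Λ => Finset.range (n (l.1 + 1)))

/-- `P_w(v) = Π_λ w_λ^{v_λ} / Σ_{u_λ} w_λ^{u_λ}`. -/
noncomputable def Pw (Λ : ℕ) (n : ℕ → ℕ) (w : ℕ → ℕ → ℝ) (v : Fin Λ → ℕ) : ℝ :=
  ∏ l : Fin Λ, w (l.1 + 1) (v l) / ∑ i ∈ Finset.range (n (l.1 + 1)), w (l.1 + 1) i

/-- `Vote(T, x) = Σ_v P_w(v)·SOA(G^v_{1:Λ})(x)`. -/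
noncomputable def voteAt {X : Type*} (Λ : ℕ) (n : ℕ → ℕ) (G : ℕ → ℕ → Set (X → ℝ))
    (w : ℕ → ℕ → ℝ) (x : X) : ℝ :=
  ∑ v ∈ paths Λ n, Pw Λ n w v * soaPath Λ G x v

/-! Before the cutoff, consecutive per-scale predictions differ by at most `2·2^{-t}`, so they
telescope: `g_l` and the aggregated prediction `g_{cutoff}` differ by less than `4·2^{-l}`.
Hence if `g_l` is more than `5·2^{-l}` away from `y`, either the cutoff is at most `l` (and the
truncation term of `Terr` is at least `2^{-l}`) or the aggregated prediction is more than
`2^{-l}` away from `y`; in both cases `Terr ≥ 2^{-l}`. The indicator of this event depends only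
on the `l`-th coordinate of the path, whose `P_w`-marginal is `w_l / Σ w_l`, so Markov's
inequality for `Terr` under `P_w` gives the bound. -/

open Finset

section Cutoff

variable (Λ : ℕ) (g : ℕ → ℝ)

lemma cutoff_le : cutoff Λ g ≤ Λ := by
  unfold cutoff
  split
  · next h => exact (Nat.find_spec h).1.2.le
  · exact le_rfl

lemma abs_sub_succ_le_of_lt_cutoff {t : ℕ} (ht : 1 ≤ t) (htc : t < cutoff Λ g) :
    |g t - g (t + 1)| ≤ 2 * ((2:ℝ) ^ t)⁻¹ := by
  by_contra! hfar
  have htΛ : t < Λ := htc.trans_le (cutoff_le Λ g)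
  have hex : ∃ l, (1 ≤ l ∧ l < Λ) ∧ 2 * ((2:ℝ) ^ l)⁻¹ < |g l - g (l + 1)| := ⟨t, ⟨ht, htΛ⟩, hfar⟩
  rw [cutoff, dif_pos hex] at htc
  exact absurd (Nat.find_le ⟨⟨ht, htΛ⟩, hfar⟩) (not_le.mpr htc)

lemma abs_sub_le_of_add_le_cutoff {l : ℕ} (hl : 1 ≤ l) :
    ∀ k, l + k ≤ cutoff Λ g →
      |g l - g (l + k)| ≤ 4 * (((2:ℝ) ^ l)⁻¹ - ((2:ℝ) ^ (l + k))⁻¹)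
  | 0, _ => by simp
  | k + 1, hk => by
    have ih := abs_sub_le_of_add_le_cutoff hl k (by omega)
    have hstep := abs_sub_succ_le_of_lt_cutoff Λ g (t := l + k) (by omega) (by omega)
    have htri := abs_sub_le (g l) (g (l + k)) (g (l + k + 1))
    have hhalf : ((2:ℝ) ^ (l + k + 1))⁻¹ = ((2:ℝ) ^ (l + k))⁻¹ / 2 := by
      rw [pow_succ, mul_inv, div_eq_mul_inv]
    rw [← add_assoc, hhalf]
    linarith

lemma inv_two_pow_le_max_hagg_of_far {l : ℕ} (hl : 1 ≤ l) {y : ℝ}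
    (hfar : 5 * ((2:ℝ) ^ l)⁻¹ < |g l - y|) :
    ((2:ℝ) ^ l)⁻¹ ≤ max |hagg Λ g - y| ((2:ℝ) ^ cutoff Λ g)⁻¹ := by
  rcases le_or_gt (cutoff Λ g) l with hcl | hlc
  · exact le_max_of_le_right (inv_anti₀ (by positivity) (pow_le_pow_right₀ one_le_two hcl))
  · obtain ⟨k, hk⟩ : ∃ k, cutoff Λ g = l + k := ⟨cutoff Λ g - l, by omega⟩
    have hclose := abs_sub_le_of_add_le_cutoff Λ g hl k hk.ge
    have hpos : (0:ℝ) ≤ ((2:ℝ) ^ (l + k))⁻¹ := by positivity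
    have htri := abs_sub_abs_le_abs_sub (g l - y) (g (l + k) - y)
    rw [sub_sub_sub_cancel_right] at htri
    refine le_max_of_le_left ?_
    rw [hagg, hk]
    linarith

end Cutoff

lemma sum_piFinset_prod_mul_apply {ι α : Type*} [Fintype ι] [DecidableEq ι] [DecidableEq α]
    (s : ι → Finset α) (p : ι → α → ℝ) (hp : ∀ j, ∑ i ∈ s j, p j i = 1) (k : ι) (f : α → ℝ) :
    ∑ v ∈ Fintype.piFinset s, (∏ j, p j (v j)) * f (v k) = ∑ i ∈ s k, p k i * f i := by
  calc ∑ v ∈ Fintype.piFinset s, (∏ j, p j (v j)) * f (v k)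
      = ∑ v ∈ Fintype.piFinset s, ∏ j, p j (v j) * (if j = k then f (v j) else 1) := by
        refine sum_congr rfl fun v _ => ?_
        rw [prod_mul_distrib, prod_ite_eq' univ k fun j => f (v j), if_pos (mem_univ k)]
    _ = ∏ j, ∑ i ∈ s j, p j i * (if j = k then f i else 1) :=
        (prod_univ_sum s fun j i => p j i * (if j = k then f i else 1)).symm
    _ = ∏ j, if j = k then ∑ i ∈ s k, p k i * f i else 1 := by
        refine prod_congr rfl fun j _ => ?_
        split_ifs with hjk
        · subst hjk; rfl
        · simp only [mul_one, hp]
    _ = ∑ i ∈ s k, p k i * f i := by rw [prod_ite_eq' univ k, if_pos (mem_univ k)]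

section Paths

variable {X : Type*} (Λ : ℕ) (G : ℕ → ℕ → Set (X → ℝ)) (x : X) (v : Fin Λ → ℕ)

lemma gseq_of_mem {l : ℕ} (hl1 : 1 ≤ l) (hl2 : l ≤ Λ) :
    gseq Λ G x v l = soa (G l (v ⟨l - 1, by omega⟩)) ((2:ℝ) ^ l)⁻¹ x :=
  dif_pos ⟨hl1, hl2⟩

lemma inv_two_pow_le_terrPath {l : ℕ} (hl1 : 1 ≤ l) (hl2 : l ≤ Λ) {y : ℝ}
    (hfar : 5 * ((2:ℝ) ^ l)⁻¹ < |soa (G l (v ⟨l - 1, by omega⟩)) ((2:ℝ) ^ l)⁻¹ x - y|) :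
    ((2:ℝ) ^ l)⁻¹ ≤ terrPath Λ G x v y := by
  rw [← gseq_of_mem Λ G x v hl1 hl2] at hfar
  exact inv_two_pow_le_max_hagg_of_far Λ _ hl1 hfar

end Paths

lemma Pw_nonneg (Λ : ℕ) (n : ℕ → ℕ) {w : ℕ → ℕ → ℝ} (hw : ∀ l i, 0 ≤ w l i) (v : Fin Λ → ℕ) :
    0 ≤ Pw Λ n w v :=
  prod_nonneg fun _ _ => div_nonneg (hw _ _) (sum_nonneg fun _ _ => hw _ _)

lemma sum_Pw_mul_apply (Λ : ℕ) (n : ℕ → ℕ) (w : ℕ → ℕ → ℝ)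
    (hW : ∀ j : Fin Λ, ∑ i ∈ range (n (j + 1)), w (j + 1) i ≠ 0) (k : Fin Λ) (f : ℕ → ℝ) :
    ∑ v ∈ paths Λ n, Pw Λ n w v * f (v k)
      = (∑ i ∈ range (n (k + 1)), w (k + 1) i * f i) / ∑ i ∈ range (n (k + 1)), w (k + 1) i := by
  rw [paths, sum_div]
  simp only [Pw]
  rw [sum_piFinset_prod_mul_apply (fun j : Fin Λ => range (n (j + 1)))
    (fun j i => w (j + 1) i / ∑ i ∈ range (n (j + 1)), w (j + 1) i)
    (fun j => by rw [← sum_div, div_self (hW j)])]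
  exact sum_congr rfl fun i _ => div_mul_eq_mul_div _ _ _

theorem stmt12_general {X : Type*} (Λ : ℕ) (x : X)
    (n : ℕ → ℕ)
    (G : ℕ → ℕ → Set (X → ℝ))
    (w : ℕ → ℕ → ℝ) (hw : ∀ l i, 0 ≤ w l i)
    (hW : ∀ l, 1 ≤ l → l ≤ Λ → 0 < ∑ i ∈ Finset.range (n l), w l i)
    (α : ℝ)
    (y : ℝ)
    (hhigh : ∑ v ∈ paths Λ n, Pw Λ n w v * terrPath Λ G x v y ≤ α) :
    ∀ l, 1 ≤ l → l ≤ Λ →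
      (∑ i ∈ Finset.range (n l),
          if 5 * ((2:ℝ) ^ l)⁻¹ < |soa (G l i) ((2:ℝ) ^ l)⁻¹ x - y| then w l i else 0)
        / (∑ i ∈ Finset.range (n l), w l i) ≤ α * 2 ^ l := by
  intro l hl1 hl2
  classical
  set far : ℕ → Prop := fun i => 5 * ((2:ℝ) ^ l)⁻¹ < |soa (G l i) ((2:ℝ) ^ l)⁻¹ x - y|
  let k : Fin Λ := ⟨l - 1, by omega⟩
  have hkl : (k : ℕ) + 1 = l := show l - 1 + 1 = l by omega
  have hmarginal := sum_Pw_mul_apply Λ n w (fun j => (hW _ (by omega) (by omega)).ne') k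
    fun i => if far i then 1 else 0
  have hmarkov : ∀ v ∈ paths Λ n, ((2:ℝ) ^ l)⁻¹ * (Pw Λ n w v * if far (v k) then 1 else 0)
      ≤ Pw Λ n w v * terrPath Λ G x v y := fun v _ => by
    have hPw := Pw_nonneg Λ n hw v
    split_ifs with hfar
    · rw [mul_one, mul_comm]
      exact mul_le_mul_of_nonneg_left (inv_two_pow_le_terrPath Λ G x v hl1 hl2 hfar) hPw
    · have : 0 ≤ terrPath Λ G x v y := (by positivity : (0:ℝ) ≤ _).trans (le_max_right _ _)
      simpa using mul_nonneg hPw this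
  have hsum := (sum_le_sum hmarkov).trans hhigh
  rw [← mul_sum, hmarginal, inv_mul_le_iff₀ (by positivity)] at hsum
  simpa only [hkl, mul_ite, mul_one, mul_zero, mul_comm α] using hsum

/-- if `(x, y) ∈ Highvote(T, α)` (that is, `y = Vote(T,x)` and the average
truncated error `Σ_v P_w(v)·Terr(G^v_{1:Λ}, x, y) ≤ α`), then for every level `λ ∈ [Λ]`
the weighted fraction of indices `v_λ` with `|SOA_{α_λ}(G_λ^{v_λ})(x) − y| > 5·α_λ` is at
most `α/α_λ`, where `α_λ = 2^{-λ}`. -/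
theorem stmt12 {X : Type*} (Λ : ℕ) (hΛ : 1 ≤ Λ) (x : X)
    (n : ℕ → ℕ) (hn : ∀ l, 1 ≤ l → l ≤ Λ → 1 ≤ n l)
    (G : ℕ → ℕ → Set (X → ℝ))
    (hG : ∀ l i, ∀ f ∈ G l i, ∀ x' : X, f x' ∈ Set.Icc (0:ℝ) 1)
    (w : ℕ → ℕ → ℝ) (hw : ∀ l i, 0 ≤ w l i)
    (hW : ∀ l, 1 ≤ l → l ≤ Λ → 0 < ∑ i ∈ Finset.range (n l), w l i)
    (α : ℝ) (hα : 0 ≤ α)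
    (y : ℝ) (hy : y = voteAt Λ n G w x)
    (hhigh : ∑ v ∈ paths Λ n, Pw Λ n w v * terrPath Λ G x v y ≤ α) :
    ∀ l, 1 ≤ l → l ≤ Λ →
      (∑ i ∈ Finset.range (n l),
          if 5 * ((2:ℝ) ^ l)⁻¹ < |soa (G l i) ((2:ℝ) ^ l)⁻¹ x - y| then w l i else 0)
        / (∑ i ∈ Finset.range (n l), w l i) ≤ α * 2 ^ l :=
  stmt12_general Λ x n G w hw hW α y hhigh
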